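/- Assume 0 < η ≤ c_∞ and let (f^t, g^t, λ^t) be the iterates of PAM. Then for every t ≥ 0 and every λ ∈ Δ^N, ⟨λ − λ^t, ∇_λ F(f^{t+1}, g^t, λ^t)⟩ ≤ 3 c_∞² ‖λ^{t+1} − λ^t‖_2 / η + c_∞ ‖c^t − b‖_1. -/

import Mathlib

open scoped BigOperators

noncomputable section

namespace EOT

/-- Square matrices as functions. -/
abbrev Mat (n : ℕ) := Fin n → Fin n → ℝ

/-- Frobenius inner product ⟨A, B⟩ = Σ_{i,j} A_{ij} B_{ij}. -/
def frob {n : ℕ} (A B : Mat n) : ℝ := ∑ i, ∑ j, A i j * B i j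

/-- Row-sum vector r(A) = A 𝟙. -/
def rowSum {n : ℕ} (A : Mat n) : Fin n → ℝ := fun i => ∑ j, A i j

/-- Column-sum vector c(A) = Aᵀ 𝟙. -/
def colSum {n : ℕ} (A : Mat n) : Fin n → ℝ := fun j => ∑ i, A i j

/-- Entrywise ℓ₁ norm of a matrix. -/
def mnorm1 {n : ℕ} (A : Mat n) : ℝ := ∑ i, ∑ j, |A i j|

/-- ℓ₁ norm of a vector. -/
def vnorm1 {m : ℕ} (v : Fin m → ℝ) : ℝ := ∑ i, |v i|

/-- Euclidean (ℓ₂) norm of a vector. -/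
def vnorm2 {m : ℕ} (v : Fin m → ℝ) : ℝ := Real.sqrt (∑ i, v i ^ 2)

/-- c_∞ := max_{k,i,j} |C^k_{ij}|. -/
def cinf {n N : ℕ} (C : Fin N → Mat n) : ℝ := ⨆ k, ⨆ i, ⨆ j, |C k i j|

/-- ι := min_j log b_j. -/
def iotaMin {n : ℕ} (b : Fin n → ℝ) : ℝ := ⨅ j, Real.log (b j)

/-- ζ^k(f,g,λ)_{ij} = exp((f_i + g_j − λ_k C^k_{ij})/η). -/
def zeta {n N : ℕ} (η : ℝ) (C : Fin N → Mat n) (f g : Fin n → ℝ)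
    (lam : Fin N → ℝ) (k : Fin N) : Mat n :=
  fun i j => Real.exp ((f i + g j - lam k * C k i j) / η)

/-- π^k(f,g,λ) = ζ^k(f,g,λ) / Σ_{k'} ‖ζ^{k'}(f,g,λ)‖₁. -/
def piMat {n N : ℕ} (η : ℝ) (C : Fin N → Mat n) (f g : Fin n → ℝ)
    (lam : Fin N → ℝ) (k : Fin N) : Mat n :=
  fun i j => zeta η C f g lam k i j / ∑ k', mnorm1 (zeta η C f g lam k')

/-- The dual objective F(f,g,λ) = ⟨f,a⟩ + ⟨g,b⟩ − η log(Σ_k ‖ζ^k‖₁) − η. -/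
def Fdual {n N : ℕ} (η : ℝ) (C : Fin N → Mat n) (a b : Fin n → ℝ)
    (f g : Fin n → ℝ) (lam : Fin N → ℝ) : ℝ :=
  (∑ i, f i * a i) + (∑ j, g j * b j)
    - η * Real.log (∑ k, mnorm1 (zeta η C f g lam k)) - η

/-- Gradient of F with respect to λ: (∇_λ F)_k = ⟨π^k(f,g,λ), C^k⟩. -/
def gradLam {n N : ℕ} (η : ℝ) (C : Fin N → Mat n) (f g : Fin n → ℝ)
    (lam : Fin N → ℝ) : Fin N → ℝ :=
  fun k => frob (piMat η C f g lam k) (C k)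

/-- `p` is the Euclidean projection of `x` onto the probability simplex. -/
def IsProjSimplex {m : ℕ} (p x : Fin m → ℝ) : Prop :=
  p ∈ stdSimplex ℝ (Fin m) ∧
    ∀ q ∈ stdSimplex ℝ (Fin m),
      vnorm2 (fun k => p k - x k) ≤ vnorm2 (fun k => q k - x k)

/-- Kullback–Leibler divergence KL(v‖w) = Σ_j v_j log(v_j / w_j). -/
def klVec {m : ℕ} (v w : Fin m → ℝ) : ℝ := ∑ j, v j * Real.log (v j / w j)

/-- The Hamiltonian E(f,g,λ¹,λ²) = F(f,g,λ¹) − (1/(2τ))‖λ¹ − λ²‖₂². -/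
def ham {n N : ℕ} (η : ℝ) (C : Fin N → Mat n) (a b : Fin n → ℝ) (τ : ℝ)
    (f g : Fin n → ℝ) (l1 l2 : Fin N → ℝ) : ℝ :=
  Fdual η C a b f g l1 - 1 / (2 * τ) * vnorm2 (fun k => l1 k - l2 k) ^ 2

/-- The rounding procedure Round(A, a, b). -/
def roundMat {n : ℕ} (A : Mat n) (a b : Fin n → ℝ) : Mat n :=
  let x : Fin n → ℝ := fun i => min (a i / rowSum A i) 1
  let A' : Mat n := fun i j => x i * A i j
  let y : Fin n → ℝ := fun j => min (b j / colSum A' j) 1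
  let A'' : Mat n := fun i j => A' i j * y j
  let erra : Fin n → ℝ := fun i => a i - rowSum A'' i
  let errb : Fin n → ℝ := fun j => b j - colSum A'' j
  fun i j => A'' i j + if vnorm1 erra = 0 then 0 else erra i * errb j / vnorm1 erra

/-- The coupling decomposition set Π_{a,b}^N. -/
def coupling {n N : ℕ} (a b : Fin n → ℝ) : Set (Fin N → Mat n) :=
  {P | (∀ k i j, 0 ≤ P k i j) ∧ rowSum (∑ k, P k) = a ∧ colSum (∑ k, P k) = b}

/-- ℓ(π, λ) = Σ_k λ_k ⟨π^k, C^k⟩. -/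
def ell {n N : ℕ} (C : Fin N → Mat n) (P : Fin N → Mat n) (lam : Fin N → ℝ) : ℝ :=
  ∑ k, lam k * frob (P k) (C k)

/-- (P, λ) is an ε-optimal solution of the EOT problem (duality-gap ≤ ε). -/
def epsOptimal {n N : ℕ} (C : Fin N → Mat n) (a b : Fin n → ℝ)
    (P : Fin N → Mat n) (lam : Fin N → ℝ) (ε : ℝ) : Prop :=
  P ∈ coupling (N := N) a b ∧ lam ∈ stdSimplex ℝ (Fin N) ∧
    ∀ μ ∈ stdSimplex ℝ (Fin N), ∀ Q ∈ coupling (N := N) a b,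
      ell C P μ - ell C Q lam ≤ ε

/-- The defining properties of the Margins procedure output (a^k, b^k). -/
def MarginsProp {n N : ℕ} (P : Fin N → Mat n) (b : Fin n → ℝ)
    (ak bk : Fin N → Fin n → ℝ) : Prop :=
  (∀ k, ak k = rowSum (P k)) ∧
  (∀ k j, 0 ≤ bk k j) ∧
  (∀ j, ∑ k, bk k j = b j) ∧
  (∀ k, ∑ j, bk k j = ∑ i, ak k i) ∧
  (∀ j k k', 0 ≤ (bk k j - colSum (P k) j) * (bk k' j - colSum (P k') j))

/-!
Write `π`, `π'` for the plans at `(f^{t+1}, g^t, λ^t)` and `(f^{t+1}, g^{t+1}, λ^t)`. The column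
update of `g` rescales `π` column by column, `π'^k_{ij} = π^k_{ij} b_j / c^t_j`, so
`∑_k ‖π^k - π'^k‖₁ ≤ ‖c^t - b‖₁`; since `|λ_k - λ^t_k| ≤ 1`, replacing the gradient at `π` by the
gradient `∇'` at `π'` costs at most `c_∞ ‖c^t - b‖₁`. Now `λ^{t+1}` is the projected gradient step
along `∇'`, and the variational inequality of the projection gives
`τ ⟨λ - λ^t, ∇'⟩ ≤ ‖λ - λ^{t+1}‖₂ ‖λ^{t+1} - λ^t‖₂ + τ ‖∇'‖₂ ‖λ^{t+1} - λ^t‖₂`,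
where `‖λ - λ^{t+1}‖₂ ≤ 2` and `‖∇'‖₂ ≤ c_∞`; with `τ = η / c_∞²` and `η ≤ c_∞` this is at most
`3 c_∞² ‖λ^{t+1} - λ^t‖₂ / η`.
-/

open Finset Filter Topology

section Vectors

variable {m : ℕ}

lemma vnorm2_nonneg (v : Fin m → ℝ) : 0 ≤ vnorm2 v :=
  Real.sqrt_nonneg _

lemma vnorm2_le_vnorm2_iff {u v : Fin m → ℝ} :
    vnorm2 u ≤ vnorm2 v ↔ ∑ i, u i ^ 2 ≤ ∑ i, v i ^ 2 :=
  Real.sqrt_le_sqrt_iff (sum_nonneg fun i _ => sq_nonneg (v i))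

lemma vnorm2_le_vnorm1 (v : Fin m → ℝ) : vnorm2 v ≤ vnorm1 v := by
  refine (Real.sqrt_le_left (sum_nonneg fun i _ => abs_nonneg (v i))).2 ?_
  simpa only [sq_abs] using sum_sq_le_sq_sum_of_nonneg fun i _ => abs_nonneg (v i)

lemma sum_mul_le_vnorm2_mul_vnorm2 (u v : Fin m → ℝ) :
    ∑ i, u i * v i ≤ vnorm2 u * vnorm2 v :=
  Real.sum_mul_le_sqrt_mul_sqrt _ u v

lemma const_inv_mem_stdSimplex (hm : 0 < m) :
    (fun _ => (m : ℝ)⁻¹) ∈ stdSimplex ℝ (Fin m) := by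
  refine ⟨fun _ => by positivity, ?_⟩
  rw [sum_const, card_univ, Fintype.card_fin, nsmul_eq_mul]
  exact mul_inv_cancel₀ (Nat.cast_ne_zero.2 hm.ne')

lemma abs_sub_le_one_of_mem_stdSimplex {p q : Fin m → ℝ} (hp : p ∈ stdSimplex ℝ (Fin m))
    (hq : q ∈ stdSimplex ℝ (Fin m)) (k : Fin m) : |p k - q k| ≤ 1 := by
  have hpk := mem_Icc_of_mem_stdSimplex hp k
  have hqk := mem_Icc_of_mem_stdSimplex hq k
  rw [abs_sub_le_iff]
  constructor <;> linarith [hpk.1, hpk.2, hqk.1, hqk.2]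

lemma vnorm2_sub_le_two_of_mem_stdSimplex {p q : Fin m → ℝ} (hp : p ∈ stdSimplex ℝ (Fin m))
    (hq : q ∈ stdSimplex ℝ (Fin m)) : vnorm2 (fun k => p k - q k) ≤ 2 := by
  refine (vnorm2_le_vnorm1 _).trans ?_
  calc vnorm1 (fun k => p k - q k) ≤ ∑ k, (p k + q k) :=
        sum_le_sum fun k _ => (abs_sub _ _).trans (by rw [abs_of_nonneg (hp.1 k),
          abs_of_nonneg (hq.1 k)])
    _ = 2 := by rw [sum_add_distrib, hp.2, hq.2]; norm_num

lemma IsProjSimplex.sum_mul_sub_nonpos {p x q : Fin m → ℝ} (hp : IsProjSimplex p x)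
    (hq : q ∈ stdSimplex ℝ (Fin m)) : ∑ k, (q k - p k) * (x k - p k) ≤ 0 := by
  obtain ⟨hpmem, hmin⟩ := hp
  set A := ∑ k, (q k - p k) * (x k - p k)
  set B := ∑ k, (q k - p k) ^ 2
  have hsegment : ∀ θ ∈ Set.Ioc (0 : ℝ) 1, 2 * A ≤ θ * B := by
    rintro θ ⟨hθ, hθ1⟩
    have hle := vnorm2_le_vnorm2_iff.1 <| hmin _ <|
      convex_stdSimplex ℝ (Fin m) hpmem hq (sub_nonneg.2 hθ1) hθ.le (sub_add_cancel 1 θ)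
    have hexpand : ∑ k, (((1 - θ) • p + θ • q) k - x k) ^ 2
        = ∑ k, (p k - x k) ^ 2 + θ * (θ * B - 2 * A) := by
      simp only [A, B, Pi.add_apply, Pi.smul_apply, smul_eq_mul, mul_sum, ← sum_sub_distrib,
        ← sum_add_distrib]
      exact sum_congr rfl fun k _ => by ring
    rw [hexpand] at hle
    nlinarith
  have hlim : Tendsto (fun θ : ℝ => θ * B) (𝓝[>] 0) (𝓝 0) := by
    have : Continuous fun θ : ℝ => θ * B := by fun_prop
    exact (this.tendsto' 0 0 (zero_mul B)).mono_left nhdsWithin_le_nhds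
  have := ge_of_tendsto hlim (eventually_of_mem (Ioc_mem_nhdsGT one_pos) hsegment)
  linarith

lemma IsProjSimplex.sum_sub_mul_le {p x q G : Fin m → ℝ} {τ : ℝ} (hτ : 0 < τ)
    (hp : IsProjSimplex p (fun k => x k + τ * G k)) (hq : q ∈ stdSimplex ℝ (Fin m)) :
    ∑ k, (q k - x k) * G k
      ≤ (2 / τ + vnorm2 G) * vnorm2 (fun k => p k - x k) := by
  have hvi := hp.sum_mul_sub_nonpos hq
  have hsplit : τ * ∑ k, (q k - x k) * G k
      = ∑ k, (q k - p k) * ((x k + τ * G k) - p k)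
        + ∑ k, (q k - p k) * (p k - x k) + τ * ∑ k, (p k - x k) * G k := by
    simp only [mul_sum, ← sum_add_distrib]
    exact sum_congr rfl fun k _ => by ring
  have h1 := (sum_mul_le_vnorm2_mul_vnorm2 (fun k => q k - p k) (fun k => p k - x k)).trans
    (mul_le_mul_of_nonneg_right (vnorm2_sub_le_two_of_mem_stdSimplex hq hp.1) (vnorm2_nonneg _))
  have h2 := sum_mul_le_vnorm2_mul_vnorm2 (fun k => p k - x k) G
  have hrhs : τ * ((2 / τ + vnorm2 G) * vnorm2 (fun k => p k - x k))
      = 2 * vnorm2 (fun k => p k - x k) + τ * (vnorm2 (fun k => p k - x k) * vnorm2 G) := by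
    field_simp
  rw [← mul_le_mul_iff_of_pos_left hτ, hsplit, hrhs]
  linarith [mul_le_mul_of_nonneg_left h2 hτ.le]

end Vectors

section Gradient

variable {n N : ℕ}

lemma abs_le_cinf (C : Fin N → Mat n) (k : Fin N) (i j : Fin n) : |C k i j| ≤ cinf C := by
  have bdd : ∀ {ι : Type} [Finite ι] (u : ι → ℝ), BddAbove (Set.range u) :=
    fun u => (Set.finite_range u).bddAbove
  exact le_ciSup_of_le (bdd _) k (le_ciSup_of_le (bdd _) i (le_ciSup (bdd fun j => |C k i j|) j))

lemma cinf_nonneg (C : Fin N → Mat n) : 0 ≤ cinf C :=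
  Real.iSup_nonneg fun _ => Real.iSup_nonneg fun _ => Real.iSup_nonneg fun _ => abs_nonneg _

lemma frob_sub_left (A B M : Mat n) : frob (A - B) M = frob A M - frob B M := by
  simp only [frob, Pi.sub_apply, sub_mul, sum_sub_distrib]

lemma abs_frob_le {A B : Mat n} {M : ℝ} (hB : ∀ i j, |B i j| ≤ M) :
    |frob A B| ≤ M * mnorm1 A := by
  simp only [frob, mnorm1, mul_sum]
  refine (abs_sum_le_sum_abs _ _).trans (sum_le_sum fun i _ => ?_)
  refine (abs_sum_le_sum_abs _ _).trans (sum_le_sum fun j _ => ?_)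
  rw [abs_mul, mul_comm M]
  exact mul_le_mul_of_nonneg_left (hB i j) (abs_nonneg _)

lemma zeta_pos (η : ℝ) (C : Fin N → Mat n) (f g : Fin n → ℝ) (lam : Fin N → ℝ) (k : Fin N)
    (i j : Fin n) : 0 < zeta η C f g lam k i j :=
  Real.exp_pos _

lemma piMat_nonneg (η : ℝ) (C : Fin N → Mat n) (f g : Fin n → ℝ) (lam : Fin N → ℝ) (k : Fin N)
    (i j : Fin n) : 0 ≤ piMat η C f g lam k i j :=
  div_nonneg (zeta_pos η C f g lam k i j).le <|
    sum_nonneg fun _ _ => sum_nonneg fun _ _ => sum_nonneg fun _ _ => abs_nonneg _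

lemma sum_mnorm1_piMat_le_one (η : ℝ) (C : Fin N → Mat n) (f g : Fin n → ℝ)
    (lam : Fin N → ℝ) : ∑ k, mnorm1 (piMat η C f g lam k) ≤ 1 := by
  have hS : 0 ≤ ∑ k', mnorm1 (zeta η C f g lam k') :=
    sum_nonneg fun k _ => sum_nonneg fun i _ => sum_nonneg fun j _ => abs_nonneg _
  have hpi : ∀ k, mnorm1 (piMat η C f g lam k)
      = mnorm1 (zeta η C f g lam k) / ∑ k', mnorm1 (zeta η C f g lam k') := by
    intro k
    unfold piMat
    rw [← abs_of_nonneg hS]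
    simp only [mnorm1, abs_div, abs_abs, sum_div]
  rw [sum_congr rfl fun k _ => hpi k, ← sum_div]
  exact div_self_le_one _

lemma vnorm2_gradLam_le_cinf (η : ℝ) (C : Fin N → Mat n) (f g : Fin n → ℝ)
    (lam : Fin N → ℝ) : vnorm2 (gradLam η C f g lam) ≤ cinf C := by
  refine (vnorm2_le_vnorm1 _).trans ?_
  calc vnorm1 (gradLam η C f g lam) ≤ ∑ k, cinf C * mnorm1 (piMat η C f g lam k) :=
        sum_le_sum fun k _ => abs_frob_le (abs_le_cinf C k)
    _ ≤ cinf C := by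
        rw [← mul_sum]
        exact mul_le_of_le_one_right (cinf_nonneg C) (sum_mnorm1_piMat_le_one η C f g lam)

lemma sum_mul_frob_sub_le (C : Fin N → Mat n) {lam mu : Fin N → ℝ}
    (hlam : lam ∈ stdSimplex ℝ (Fin N)) (hmu : mu ∈ stdSimplex ℝ (Fin N))
    (P Q : Fin N → Mat n) :
    ∑ k, (lam k - mu k) * (frob (P k) (C k) - frob (Q k) (C k))
      ≤ cinf C * ∑ k, mnorm1 (P k - Q k) := by
  rw [mul_sum]
  refine sum_le_sum fun k _ => (le_abs_self _).trans ?_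
  rw [abs_mul, ← frob_sub_left]
  exact (mul_le_of_le_one_left (abs_nonneg _) (abs_sub_le_one_of_mem_stdSimplex hlam hmu k)).trans
    (abs_frob_le (abs_le_cinf C k))

end Gradient

section ColumnScaling

variable {n N : ℕ}

def colRescale (P : Fin N → Mat n) (b : Fin n → ℝ) : Fin N → Mat n :=
  fun k i j => P k i j * b j / colSum (∑ k, P k) j

lemma colSum_sum_apply (P : Fin N → Mat n) (j : Fin n) :
    colSum (∑ k, P k) j = ∑ k, ∑ i, P k i j := by
  simp only [colSum, Finset.sum_apply]
  exact sum_comm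

lemma sum_mnorm1_eq_sum_colSum {P : Fin N → Mat n} (hP : ∀ k i j, 0 ≤ P k i j) :
    ∑ k, mnorm1 (P k) = ∑ j, colSum (∑ k, P k) j := by
  simp only [mnorm1, colSum_sum_apply, abs_of_nonneg (hP _ _ _)]
  rw [sum_congr rfl fun k _ => sum_comm, sum_comm]

lemma sum_mnorm1_sub_colRescale_le {P : Fin N → Mat n} (hP : ∀ k i j, 0 ≤ P k i j)
    (b : Fin n → ℝ) :
    ∑ k, mnorm1 (P k - colRescale P b k) ≤ vnorm1 (fun j => colSum (∑ k, P k) j - b j) := by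
  set c := colSum (∑ k, P k) with hc
  have hterm : ∀ k i j, |P k i j - P k i j * b j / c j| = P k i j * |1 - b j / c j| := by
    intro k i j
    rw [show P k i j - P k i j * b j / c j = P k i j * (1 - b j / c j) by ring, abs_mul,
      abs_of_nonneg (hP k i j)]
  calc ∑ k, mnorm1 (P k - colRescale P b k)
      = ∑ j, c j * |1 - b j / c j| := by
        simp only [mnorm1, colRescale, Pi.sub_apply, ← hc, hterm]
        rw [sum_congr rfl fun k _ => sum_comm, sum_comm]
        refine sum_congr rfl fun j _ => ?_
        rw [hc, colSum_sum_apply]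
        simp only [sum_mul]
    _ ≤ ∑ j, |c j - b j| := sum_le_sum fun j _ => by
        have hcj : 0 ≤ c j := by
          rw [hc, colSum_sum_apply]
          exact sum_nonneg fun k _ => sum_nonneg fun i _ => hP k i j
        rcases hcj.eq_or_lt with h0 | hpos
        · rw [← h0, zero_mul]
          exact abs_nonneg _
        · rw [show c j * |1 - b j / c j| = |c j * (1 - b j / c j)| by
            rw [abs_mul, abs_of_pos hpos], mul_sub, mul_one, mul_div_cancel₀ _ hpos.ne']

lemma zeta_add_log {η : ℝ} (hη : η ≠ 0) (C : Fin N → Mat n) (f g : Fin n → ℝ)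
    (lam : Fin N → ℝ) {w : Fin n → ℝ} (hw : ∀ j, 0 < w j) (k : Fin N) (i j : Fin n) :
    zeta η C f (fun j => g j + η * Real.log (w j)) lam k i j = zeta η C f g lam k i j * w j := by
  rw [zeta, zeta, ← Real.exp_log (hw j), ← Real.exp_add, Real.exp_log (hw j)]
  congr 1
  field_simp
  ring

lemma piMat_sinkhorn_col {η : ℝ} (hη : η ≠ 0) (C : Fin N → Mat n) (f g : Fin n → ℝ)
    (lam : Fin N → ℝ) {b : Fin n → ℝ} (hb : ∑ j, b j = 1) (hb' : ∀ j, 0 < b j) :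
    piMat η C f (fun j => g j + η * Real.log (b j / colSum (∑ k, zeta η C f g lam k) j)) lam
      = colRescale (piMat η C f g lam) b := by
  funext k i j
  rw [colRescale]
  set Z := zeta η C f g lam with hZ
  set s := colSum (∑ k, Z k) with hs
  have hZ_pos : ∀ k i j, 0 < Z k i j := zeta_pos η C f g lam
  have hs_pos : ∀ j, 0 < s j := fun j => by
    rw [hs, colSum_sum_apply]
    exact sum_pos (fun k _ => sum_pos (fun i _ => hZ_pos k i j) ⟨i, mem_univ i⟩) ⟨k, mem_univ k⟩
  have hZ' := zeta_add_log hη C f g lam (fun j => div_pos (hb' j) (hs_pos j))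
  have hS' : ∑ k, mnorm1 (zeta η C f (fun j => g j + η * Real.log (b j / s j)) lam k) = 1 := by
    rw [sum_mnorm1_eq_sum_colSum fun k i j => (zeta_pos _ _ _ _ _ k i j).le, ← hb]
    refine sum_congr rfl fun j _ => ?_
    simp only [colSum_sum_apply, hZ', ← sum_mul]
    rw [← colSum_sum_apply, ← hs, mul_div_cancel₀ _ (hs_pos j).ne']
  have hS_pos : 0 < ∑ k, mnorm1 (Z k) := by
    rw [sum_mnorm1_eq_sum_colSum fun k i j => (hZ_pos k i j).le]
    exact sum_pos (fun j _ => hs_pos j) ⟨j, mem_univ j⟩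
  have hcol : colSum (∑ k, piMat η C f g lam k) j = s j / ∑ k, mnorm1 (Z k) := by
    simp only [colSum_sum_apply, piMat, ← hZ, ← sum_div]
    rw [← colSum_sum_apply]
  rw [hcol]
  simp only [piMat, ← hZ, hS', div_one, hZ']
  field_simp

end ColumnScaling

lemma two_div_step_add_le {η c : ℝ} (hη : 0 < η) (hηc : η ≤ c) :
    2 / (η / c ^ 2) + c ≤ 3 * c ^ 2 / η := by
  have hc : c ≤ c ^ 2 / η := by
    rw [le_div_iff₀ hη, sq]
    exact mul_le_mul_of_nonneg_left hηc (hη.le.trans hηc)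
  calc 2 / (η / c ^ 2) + c = 2 * c ^ 2 / η + c := by rw [div_div_eq_mul_div, mul_div_assoc]
    _ ≤ 2 * c ^ 2 / η + c ^ 2 / η := by gcongr
    _ = 3 * c ^ 2 / η := by ring

theorem pam_lambda_inner_bound_general
    {n N : ℕ} (hN : 0 < N)
    (C : Fin N → Mat n) (b : Fin n → ℝ)
    (hb : b ∈ stdSimplex ℝ (Fin n))
    (hb' : ∀ j, 0 < b j)
    (η : ℝ) (hη : 0 < η) (hc : 0 < cinf C) (hηc : η ≤ cinf C)
    (τ : ℝ) (hτ : τ = η / cinf C ^ 2)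
    (f g : ℕ → Fin n → ℝ) (lam : ℕ → Fin N → ℝ)
    (hlam0 : lam 0 = fun _ => (N : ℝ)⁻¹)
    (hgstep : ∀ t, g (t + 1) = fun j =>
      g t j + η * Real.log (b j / colSum (∑ k, zeta η C (f (t + 1)) (g t) (lam t) k) j))
    (hlamstep : ∀ t, IsProjSimplex (lam (t + 1))
      (fun k => lam t k + τ * gradLam η C (f (t + 1)) (g (t + 1)) (lam t) k))
    (ct : ℕ → Fin n → ℝ)
    (hct : ∀ t, ct t = colSum (∑ k, piMat η C (f (t + 1)) (g t) (lam t) k)) :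
    ∀ t : ℕ, ∀ lamv ∈ stdSimplex ℝ (Fin N),
      (∑ k, (lamv k - lam t k) * gradLam η C (f (t + 1)) (g t) (lam t) k)
        ≤ 3 * cinf C ^ 2 * vnorm2 (fun k => lam (t + 1) k - lam t k) / η
          + cinf C * vnorm1 (fun j => ct t j - b j) := by
  intro t lamv hlamv
  have hlam_mem : ∀ u, lam u ∈ stdSimplex ℝ (Fin N)
    | 0 => hlam0 ▸ const_inv_mem_stdSimplex hN
    | u + 1 => (hlamstep u).1
  set G := gradLam η C (f (t + 1)) (g t) (lam t)
  set G' := gradLam η C (f (t + 1)) (g (t + 1)) (lam t)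
  set D := vnorm2 (fun k => lam (t + 1) k - lam t k)
  have hπ' : piMat η C (f (t + 1)) (g (t + 1)) (lam t)
      = colRescale (piMat η C (f (t + 1)) (g t) (lam t)) b := by
    rw [hgstep t]
    exact piMat_sinkhorn_col hη.ne' C _ _ _ hb.2 hb'
  have hprojected : ∑ k, (lamv k - lam t k) * G' k ≤ 3 * cinf C ^ 2 / η * D := by
    refine ((hlamstep t).sum_sub_mul_le (by rw [hτ]; positivity) hlamv).trans ?_
    refine mul_le_mul_of_nonneg_right ?_ (vnorm2_nonneg _)
    rw [hτ]
    exact (add_le_add_right (vnorm2_gradLam_le_cinf ..) _).trans (two_div_step_add_le hη hηc)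
  have hrescaled :
      ∑ k, (lamv k - lam t k) * (G k - G' k) ≤ cinf C * vnorm1 (fun j => ct t j - b j) := by
    refine (sum_mul_frob_sub_le C hlamv (hlam_mem t) _ _).trans ?_
    rw [hπ', hct t]
    exact mul_le_mul_of_nonneg_left (sum_mnorm1_sub_colRescale_le (piMat_nonneg η C _ _ _) b) hc.le
  calc ∑ k, (lamv k - lam t k) * G k
      = ∑ k, (lamv k - lam t k) * G' k + ∑ k, (lamv k - lam t k) * (G k - G' k) := by
        rw [← sum_add_distrib]
        exact sum_congr rfl fun k _ => by ring
    _ ≤ 3 * cinf C ^ 2 / η * D + cinf C * vnorm1 (fun j => ct t j - b j) :=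
        add_le_add hprojected hrescaled
    _ = _ := by ring

/-- bound on ⟨λ − λ^t, ∇_λ F(f^{t+1}, g^t, λ^t)⟩ along PAM. -/
theorem pam_lambda_inner_bound
    {n N : ℕ} (hn : 0 < n) (hN : 0 < N)
    (C : Fin N → Mat n) (a b : Fin n → ℝ)
    (ha : a ∈ stdSimplex ℝ (Fin n)) (hb : b ∈ stdSimplex ℝ (Fin n))
    (ha' : ∀ i, 0 < a i) (hb' : ∀ j, 0 < b j)
    (η : ℝ) (hη : 0 < η) (hc : 0 < cinf C) (hηc : η ≤ cinf C)
    (τ : ℝ) (hτ : τ = η / cinf C ^ 2)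
    (f g : ℕ → Fin n → ℝ) (lam : ℕ → Fin N → ℝ)
    (hf0 : f 0 = fun _ => 1) (hg0 : g 0 = fun _ => 1)
    (hlam0 : lam 0 = fun _ => (N : ℝ)⁻¹)
    (hfstep : ∀ t, f (t + 1) = fun i =>
      f t i + η * Real.log (a i / rowSum (∑ k, zeta η C (f t) (g t) (lam t) k) i))
    (hgstep : ∀ t, g (t + 1) = fun j =>
      g t j + η * Real.log (b j / colSum (∑ k, zeta η C (f (t + 1)) (g t) (lam t) k) j))
    (hlamstep : ∀ t, IsProjSimplex (lam (t + 1))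
      (fun k => lam t k + τ * gradLam η C (f (t + 1)) (g (t + 1)) (lam t) k))
    (ct : ℕ → Fin n → ℝ)
    (hct : ∀ t, ct t = colSum (∑ k, piMat η C (f (t + 1)) (g t) (lam t) k)) :
    ∀ t : ℕ, ∀ lamv ∈ stdSimplex ℝ (Fin N),
      (∑ k, (lamv k - lam t k) * gradLam η C (f (t + 1)) (g t) (lam t) k)
        ≤ 3 * cinf C ^ 2 * vnorm2 (fun k => lam (t + 1) k - lam t k) / η
          + cinf C * vnorm1 (fun j => ct t j - b j) :=
  pam_lambda_inner_bound_general hN C b hb hb' η hη hc hηc τ hτ f g lam hlam0 hgstep hlamstep ct hct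

end EOT

end
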